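/- arXiv:1805.07001 — 2 statements merged into one kernel-verified Lean document; each statement's English description precedes it below -/
import Mathlib

section
/- For the Jacobi theta function written via the triple product as Θ = ϑ_1/η^3 with ϑ_1(q,y) = Σ_{n ∈ ℤ+1/2} y^n q^{n²/2}, a coefficient c(n,r) of Θ = Σ c(n,r) q^n y^r is positive if and only if r ∈ (1/2)ℤ \ ℤ and 2n ≥ r² − 1/4, and c(n,r) = 0 otherwise. -/
/-!
STATEMENT 1. Coefficients of the Jacobi theta function Θ = ϑ₁/η³.
By the Jacobi triple product, Θ = Σ_{s ∈ ℤ} y^{s+1/2} q^{((s+1/2)²-1/4)/2} · ∏_{m≥1}(1-q^m)^{-3},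
so the coefficient of q^n y^r is `p₃(n - (s²+s)/2)` when r = s + 1/2 (a half-integer)
and 0 otherwise, where p₃ counts 3-colored partitions (the coefficients of ∏(1-q^m)^{-3}).
The claim: c(n,r) > 0 iff r ∈ (1/2)ℤ \ ℤ and 2n ≥ r² − 1/4; otherwise c(n,r) = 0.
-/

/-- The number of `c`-colored partitions of `k`, i.e. the coefficient of `q^k`
in `∏_{m≥1} (1-q^m)^{-c}`. -/
noncomputable def coloredPartitions (c k : ℕ) : ℕ :=
  ∑ t ∈ Finset.Nat.antidiagonalTuple c k, ∏ i, Fintype.card (Nat.Partition (t i))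

/-- Coefficient of `q^k` in `∏_{m≥1}(1-q^m)^{-3}` (extended by 0 to negative `k`). -/
noncomputable def p3 (k : ℤ) : ℕ :=
  if 0 ≤ k then coloredPartitions 3 k.toNat else 0

open Classical in
/-- The coefficient `c(n,r)` of `q^n y^r` in `Θ = ϑ₁/η³`, as given by the Jacobi
triple product: nonzero only for half-integers `r = s + 1/2`, where it is given by
`p₃` evaluated at `n - (s² + s)/2` (note `r²/2 - 1/8 = (s² + s)/2`). -/
noncomputable def thetaCoeff (n : ℤ) (r : ℚ) : ℝ :=
  if h : ∃ s : ℤ, r = (s : ℚ) + 1/2 then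
    (p3 (n - (h.choose ^ 2 + h.choose) / 2) : ℝ)
  else 0

lemma cp_pos (k : ℕ) : 0 < coloredPartitions 3 k := by
  refine Finset.sum_pos (fun t ht => Finset.prod_pos fun i _ => Fintype.card_pos) ?_
  exact ⟨![k, 0, 0], by simp [Finset.Nat.mem_antidiagonalTuple, Fin.sum_univ_three]⟩

lemma p3_pos_iff (k : ℤ) : 0 < p3 k ↔ 0 ≤ k := by
  unfold p3
  split
  · simpa [cp_pos] using ‹0 ≤ k›
  · simpa using ‹¬ 0 ≤ k›

theorem stmt1 (n : ℤ) (r : ℚ) :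
    (0 < thetaCoeff n r ↔
      ((∃ s : ℤ, r = (s : ℚ) + 1/2) ∧ r ^ 2 - 1/4 ≤ 2 * (n : ℚ))) ∧
    (¬ ((∃ s : ℤ, r = (s : ℚ) + 1/2) ∧ r ^ 2 - 1/4 ≤ 2 * (n : ℚ)) →
      thetaCoeff n r = 0) := by
  unfold thetaCoeff
  split
  next h =>
    set s := h.choose with hs
    have hspec : r = (s : ℚ) + 1/2 := h.choose_spec
    have hsq : r ^ 2 - 1/4 = ((s ^ 2 + s : ℤ) : ℚ) := by push_cast; rw [hspec]; ring
    obtain ⟨m, hm⟩ : (2 : ℤ) ∣ s ^ 2 + s := by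
      have := Int.even_mul_succ_self s
      rcases this with ⟨m, hm⟩
      exact ⟨m, by linarith [hm]⟩
    have hdiv : (s ^ 2 + s) / 2 = m := by omega
    have key : (0 : ℚ) ≤ (n : ℚ) - ((s ^ 2 + s : ℤ) : ℚ) / 2 ↔ r ^ 2 - 1/4 ≤ 2 * (n : ℚ) := by
      rw [hsq]; push_cast; constructor <;> intro <;> linarith
    constructor
    · rw [show ((p3 (n - (s ^ 2 + s) / 2) : ℝ)) = _ from rfl]
      constructor
      · intro hp
        refine ⟨h, ?_⟩
        have : 0 < p3 (n - (s ^ 2 + s) / 2) := by exact_mod_cast hp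
        rw [p3_pos_iff] at this
        rw [← key]
        rw [hdiv] at this
        have hmn : m ≤ n := by omega
        push_cast [hm]
        linarith [show ((m : ℚ)) ≤ n by exact_mod_cast hmn]
      · rintro ⟨-, hle⟩
        rw [← key] at hle
        have hq : (m : ℚ) ≤ n := by
          rw [hm] at hle; push_cast at hle; linarith
        have : m ≤ n := by exact_mod_cast hq
        have : 0 < p3 (n - (s ^ 2 + s) / 2) := by
          rw [p3_pos_iff, hdiv]; omega
        exact_mod_cast this
    · intro hcon
      have hle : ¬ (r ^ 2 - 1/4 ≤ 2 * (n : ℚ)) := fun hle => hcon ⟨h, hle⟩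
      rw [← key] at hle
      have hmn : n < m := by
        rw [hm] at hle; push_cast at hle
        by_contra hc
        exact hle (by linarith [show (m : ℚ) ≤ n by exact_mod_cast (not_lt.mp hc)])
      have : p3 (n - (s ^ 2 + s) / 2) = 0 := by
        unfold p3; rw [if_neg]; rw [hdiv]; omega
      simp [this]
  next h =>
    refine ⟨?_, fun _ => rfl⟩
    simp only [lt_self_iff_false, false_iff]
    exact fun hc => h hc.1
end

section
/- Suppose (X,β) of K3^[n] type satisfies (β,β) = −2 + Σ_{i=1}^{n−1} 2d_i − (Σ r_i)²/(2n−2) and ±[β] = ±[Σ r_i] for integers d_i, r_i with 2d_i − r_i²/2 ≥ 0. Then the coefficient (φ^{n−1}/Δ)_β is strictly positive, where φ = (−℘ + E_2/12)Θ²; conversely if (φ^{n−1}/Δ)_β > 0 then such integers exist. -/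
/-- Coefficient of `q^k` in `1/Δ = q^{-1} ∏_{m≥1}(1-q^m)^{-24}`. -/
noncomputable def p24 (k : ℤ) : ℕ :=
  if 0 ≤ k + 1 then coloredPartitions 24 (k + 1).toNat else 0

/-- The coefficient of `q^d y^r` in `φ = (−℘ + E₂/12)Θ² = Θ·D_y²Θ − (D_yΘ)²`. -/
noncomputable def phiCoeff (d r : ℤ) : ℝ :=
  (1/2) * ∑' p : ℤ × ℤ,
    thetaCoeff p.1 ((p.2 : ℚ) + 1/2) * thetaCoeff (d - p.1) ((r : ℚ) - (p.2 : ℚ) - 1/2) *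
      (((p.2 : ℝ) + 1/2) - ((r : ℝ) - (p.2 : ℝ) - 1/2)) ^ 2

/-- Coefficients of the powers `φ^k`. -/
noncomputable def phiPow : ℕ → ℤ → ℤ → ℝ
  | 0, d, r => if d = 0 ∧ r = 0 then 1 else 0
  | (k + 1), d, r => ∑' p : ℤ × ℤ, phiCoeff p.1 p.2 * phiPow k (d - p.1) (r - p.2)

/-- The coefficient of `q^d y^r` in `φ^{n-1}/Δ`. -/
noncomputable def FCoeff (n : ℕ) (d r : ℤ) : ℝ :=
  ∑' e : ℤ, phiPow (n - 1) e r * (p24 (d - e) : ℝ)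

/-!
All coefficients involved are nonnegative (theta coefficients count colored partitions and the
weight in `φ` is a square), so positivity of a coefficient of `φ^{n-1}/Δ` is a question about
supports: `φ` is supported exactly on `r² ≤ 4d`, `φ^{n-1}` on sums of `n - 1` such points, and
`1/Δ` on exponents `≥ -1`. The shifts `(dᵢ, rᵢ) ↦ (dᵢ + m rᵢ + m², rᵢ + 2m)` and the sign change
`rᵢ ↦ -rᵢ` preserve every `4dᵢ - rᵢ²` and the norm `2d - r²/(2n-2)` of the sum, and move `Σ rᵢ`
through its class `±[Σ rᵢ]` modulo `2n - 2`; this turns the support condition into the stated one.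
-/

lemma mul_pos_iff_of_nonneg {R : Type*} [MulZeroClass R] [PartialOrder R] [PosMulStrictMono R]
    {a b : R} (ha : 0 ≤ a) (hb : 0 ≤ b) : 0 < a * b ↔ 0 < a ∧ 0 < b :=
  ⟨fun h => ⟨ha.lt_of_ne (by rintro rfl; simp at h), hb.lt_of_ne (by rintro rfl; simp at h)⟩,
    fun h => mul_pos h.1 h.2⟩

lemma tsum_pos_iff_of_nonneg {α : Type*} {f : α → ℝ} (hf : ∀ a, 0 ≤ f a)
    (hfin : {a | 0 < f a}.Finite) : 0 < ∑' a, f a ↔ ∃ a, 0 < f a := by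
  refine ⟨fun h => ?_, fun ⟨a, ha⟩ => ?_⟩
  · by_contra! hle
    exact h.not_ge (tsum_nonpos hle)
  · refine Summable.tsum_pos (summable_of_hasFiniteSupport ?_) hf a ha
    exact hfin.subset fun a ha => (hf a).lt_of_ne' ha

lemma coloredPartitions_pos {c : ℕ} (hc : 0 < c) (k : ℕ) : 0 < coloredPartitions c k := by
  obtain ⟨c, rfl⟩ : ∃ c', c = c' + 1 := ⟨c - 1, by omega⟩
  refine Finset.sum_pos' (fun _ _ => Nat.zero_le _) ⟨Fin.cons k 0, ?_, ?_⟩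
  · simp [Finset.Nat.mem_antidiagonalTuple, Fin.sum_cons]
  · exact Finset.prod_pos fun i _ => Fintype.card_pos_iff.mpr ⟨Nat.Partition.indiscrete _⟩

lemma p24_pos_iff (k : ℤ) : 0 < p24 k ↔ -1 ≤ k := by
  unfold p24
  split_ifs with hk
  · exact iff_of_true (coloredPartitions_pos (by norm_num) _) (by omega)
  · exact iff_of_false (lt_irrefl 0) (by omega)

lemma thetaCoeff_nonneg (n : ℤ) (r : ℚ) : 0 ≤ thetaCoeff n r := by
  unfold thetaCoeff
  split <;> positivity

lemma thetaCoeff_int_add_half (n s : ℤ) :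
    thetaCoeff n ((s : ℚ) + 1/2) = p3 (n - (s ^ 2 + s) / 2) := by
  have h : ∃ s' : ℤ, (s : ℚ) + 1/2 = (s' : ℚ) + 1/2 := ⟨s, rfl⟩
  have hs : h.choose = s := by exact_mod_cast (add_right_cancel h.choose_spec).symm
  rw [thetaCoeff, dif_pos h, hs]

lemma even_sq_add_self (s : ℤ) : Even (s ^ 2 + s) := by
  simpa [sq, mul_add] using Int.even_mul_succ_self s

lemma thetaCoeff_int_add_half_pos_iff (n s : ℤ) :
    0 < thetaCoeff n ((s : ℚ) + 1/2) ↔ s ^ 2 + s ≤ 2 * n := by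
  obtain ⟨c, hc⟩ := even_sq_add_self s
  rw [thetaCoeff_int_add_half, Nat.cast_pos, p3_pos_iff]
  omega

lemma phiCoeff_summand_pos_iff (d r : ℤ) (p : ℤ × ℤ) :
    0 < thetaCoeff p.1 ((p.2 : ℚ) + 1/2) * thetaCoeff (d - p.1) ((r : ℚ) - (p.2 : ℚ) - 1/2) *
        (((p.2 : ℝ) + 1/2) - ((r : ℝ) - (p.2 : ℝ) - 1/2)) ^ 2 ↔
      p.2 ^ 2 + p.2 ≤ 2 * p.1 ∧ (r - p.2 - 1) ^ 2 + (r - p.2 - 1) ≤ 2 * (d - p.1) ∧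
        2 * p.2 + 1 ≠ r := by
  have hshift : (r : ℚ) - (p.2 : ℚ) - 1/2 = ((r - p.2 - 1 : ℤ) : ℚ) + 1/2 := by push_cast; ring
  have hsq : ((p.2 : ℝ) + 1/2) - ((r : ℝ) - (p.2 : ℝ) - 1/2) = ((2 * p.2 + 1 - r : ℤ) : ℝ) := by
    push_cast; ring
  rw [hshift, hsq, mul_pos_iff_of_nonneg (mul_nonneg (thetaCoeff_nonneg _ _)
    (thetaCoeff_nonneg _ _)) (sq_nonneg _), mul_pos_iff_of_nonneg (thetaCoeff_nonneg _ _)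
    (thetaCoeff_nonneg _ _), thetaCoeff_int_add_half_pos_iff, thetaCoeff_int_add_half_pos_iff,
    sq_pos_iff, Int.cast_ne_zero, sub_ne_zero, and_assoc]

/-- Splitting `r - 1 = s + t` into two theta exponents with `s ≠ t` costs
`(s² + s + t² + t) / 2 = (r² - 1 + (s - t)²) / 4`, which is minimal for `|s - t| ≤ 2`. -/
lemma exists_theta_split_iff (d r : ℤ) :
    (∃ a s : ℤ, s ^ 2 + s ≤ 2 * a ∧ (r - s - 1) ^ 2 + (r - s - 1) ≤ 2 * (d - a) ∧
      2 * s + 1 ≠ r) ↔ r ^ 2 ≤ 4 * d := by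
  constructor
  · rintro ⟨a, s, hs, ht, hne⟩
    have : 1 ≤ (2 * s + 1 - r) ^ 2 := by
      rcases (sub_ne_zero.mpr hne).lt_or_gt with h | h <;> nlinarith
    nlinarith
  · intro h
    obtain ⟨m, rfl | rfl⟩ := Int.even_or_odd' r
    · obtain ⟨c, hc⟩ := even_sq_add_self m
      exact ⟨c, m, by omega, by nlinarith, by omega⟩
    · obtain ⟨c, hc⟩ := even_sq_add_self (m + 1)
      have : m ^ 2 + m + 1 ≤ d := by nlinarith
      exact ⟨c, m + 1, by omega, by nlinarith, by omega⟩

lemma phiCoeff_nonneg (d r : ℤ) : 0 ≤ phiCoeff d r :=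
  mul_nonneg (by norm_num) (tsum_nonneg fun _ =>
    mul_nonneg (mul_nonneg (thetaCoeff_nonneg _ _) (thetaCoeff_nonneg _ _)) (sq_nonneg _))

lemma phiCoeff_pos_iff (d r : ℤ) : 0 < phiCoeff d r ↔ r ^ 2 ≤ 4 * d := by
  rw [phiCoeff, mul_pos_iff_of_pos_left (by norm_num), tsum_pos_iff_of_nonneg]
  · simp only [phiCoeff_summand_pos_iff, Prod.exists]
    exact exists_theta_split_iff d r
  · exact fun _ =>
      mul_nonneg (mul_nonneg (thetaCoeff_nonneg _ _) (thetaCoeff_nonneg _ _)) (sq_nonneg _)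
  · refine (Set.finite_Icc ((0 : ℤ), -(2 * d + 1)) (d, 2 * d + 1)).subset fun p hp => ?_
    obtain ⟨hs, ht, -⟩ := (phiCoeff_summand_pos_iff d r p).mp hp
    have := sq_nonneg (2 * p.2 + 1)
    have := sq_nonneg (2 * (r - p.2 - 1) + 1)
    simp only [Set.mem_Icc]
    refine ⟨⟨by nlinarith, by nlinarith⟩, by nlinarith, by nlinarith⟩

def IsSumOfPhiSupport (k : ℕ) (d r : ℤ) : Prop :=
  ∃ dd rr : Fin k → ℤ, (∀ i, 0 ≤ 4 * dd i - rr i ^ 2) ∧ ∑ i, dd i = d ∧ ∑ i, rr i = r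

namespace IsSumOfPhiSupport

lemma zero_iff (d r : ℤ) : IsSumOfPhiSupport 0 d r ↔ d = 0 ∧ r = 0 := by
  simp [IsSumOfPhiSupport, eq_comm]

lemma succ_iff (k : ℕ) (d r : ℤ) :
    IsSumOfPhiSupport (k + 1) d r ↔
      ∃ p : ℤ × ℤ, p.2 ^ 2 ≤ 4 * p.1 ∧ IsSumOfPhiSupport k (d - p.1) (r - p.2) := by
  constructor
  · rintro ⟨dd, rr, h, hd, hr⟩
    refine ⟨(dd 0, rr 0), by linarith [h 0], fun i => dd i.succ, fun i => rr i.succ,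
      fun i => h i.succ, ?_, ?_⟩
    · rw [← hd, Fin.sum_univ_succ]; ring
    · rw [← hr, Fin.sum_univ_succ]; ring
  · rintro ⟨p, hp, dd, rr, h, hd, hr⟩
    refine ⟨Fin.cons p.1 dd, Fin.cons p.2 rr, Fin.cases (by simpa using hp) h, ?_, ?_⟩
    · rw [Fin.sum_cons, hd]; ring
    · rw [Fin.sum_cons, hr]; ring

variable {k : ℕ} {d r : ℤ}

lemma nonneg (h : IsSumOfPhiSupport k d r) : 0 ≤ d := by
  obtain ⟨dd, rr, h, rfl, -⟩ := h
  exact Finset.sum_nonneg fun i _ => by nlinarith [h i, sq_nonneg (rr i)]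

lemma mono (hk : 0 < k) (h : IsSumOfPhiSupport k d r) {d' : ℤ} (hd : d ≤ d') :
    IsSumOfPhiSupport k d' r := by
  obtain ⟨k, rfl⟩ : ∃ k', k = k' + 1 := ⟨k - 1, by omega⟩
  obtain ⟨p, hp, hrest⟩ := (succ_iff k d r).mp h
  refine (succ_iff k d' r).mpr ⟨(p.1 + (d' - d), p.2), by dsimp only; linarith, ?_⟩
  convert hrest using 1
  dsimp only
  ring

lemma neg (h : IsSumOfPhiSupport k d r) : IsSumOfPhiSupport k d (-r) := by
  obtain ⟨dd, rr, h, hd, hr⟩ := h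
  exact ⟨dd, fun i => -rr i, by simpa only [neg_sq] using h, hd, by simp [hr]⟩

/-- The shift `(dᵢ, rᵢ) ↦ (dᵢ + m rᵢ + m², rᵢ + 2m)` preserves each `4dᵢ - rᵢ²`. -/
lemma shift (h : IsSumOfPhiSupport k d r) (m : ℤ) :
    IsSumOfPhiSupport k (d + m * r + k * m ^ 2) (r + 2 * k * m) := by
  obtain ⟨dd, rr, h, rfl, rfl⟩ := h
  refine ⟨fun i => dd i + m * rr i + m ^ 2, fun i => rr i + 2 * m, fun i => ?_, ?_, ?_⟩
  · nlinarith [h i]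
  · simp [Finset.sum_add_distrib, Finset.mul_sum]
  · simp [Finset.sum_add_distrib]; ring

lemma of_norm_eq_of_modEq (hk : 0 < k) {D R : ℤ} (h : IsSumOfPhiSupport k D R)
    (hnorm : 2 * (d : ℚ) - (r : ℚ) ^ 2 / (2 * k) = 2 * (D : ℚ) - (R : ℚ) ^ 2 / (2 * k))
    (hr : r ≡ R [ZMOD 2 * k] ∨ r ≡ -R [ZMOD 2 * k]) : IsSumOfPhiSupport k d r := by
  wlog hR : r ≡ R [ZMOD 2 * k] generalizing R
  · have hR' := hr.resolve_left hR
    exact this h.neg (by rwa [Int.cast_neg, neg_sq]) (Or.inl hR') hR'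
  obtain ⟨m, hm⟩ := hR.symm.dvd
  have hr' : r = R + 2 * k * m := by linarith
  have hk' : (k : ℚ) ≠ 0 := by positivity
  subst hr'
  field_simp at hnorm
  push_cast at hnorm
  have hd : d = D + m * R + k * m ^ 2 := by
    have : (d : ℚ) = D + m * R + k * m ^ 2 := by
      apply mul_left_cancel₀ hk'
      linear_combination hnorm / 4
    exact_mod_cast this
  exact hd ▸ h.shift m

end IsSumOfPhiSupport

lemma phiPow_nonneg (k : ℕ) (d r : ℤ) : 0 ≤ phiPow k d r := by
  induction k generalizing d r with
  | zero => unfold phiPow; split <;> norm_num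
  | succ k ih => exact tsum_nonneg fun p => mul_nonneg (phiCoeff_nonneg _ _) (ih _ _)

lemma phiPow_pos_iff (k : ℕ) (d r : ℤ) : 0 < phiPow k d r ↔ IsSumOfPhiSupport k d r := by
  induction k generalizing d r with
  | zero =>
    rw [IsSumOfPhiSupport.zero_iff, phiPow]
    split_ifs with h
    · exact iff_of_true one_pos h
    · exact iff_of_false (lt_irrefl 0) h
  | succ k ih =>
    have hpos (p : ℤ × ℤ) : 0 < phiCoeff p.1 p.2 * phiPow k (d - p.1) (r - p.2) ↔
        p.2 ^ 2 ≤ 4 * p.1 ∧ IsSumOfPhiSupport k (d - p.1) (r - p.2) := by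
      rw [mul_pos_iff_of_nonneg (phiCoeff_nonneg _ _) (phiPow_nonneg _ _ _), phiCoeff_pos_iff, ih]
    rw [IsSumOfPhiSupport.succ_iff, phiPow, tsum_pos_iff_of_nonneg, exists_congr hpos]
    · exact fun p => mul_nonneg (phiCoeff_nonneg _ _) (phiPow_nonneg _ _ _)
    · refine (Set.finite_Icc ((0 : ℤ), -(2 * d + 1)) (d, 2 * d + 1)).subset fun p hp => ?_
      obtain ⟨hp, hrest⟩ := (hpos p).mp hp
      have := hrest.nonneg
      simp only [Set.mem_Icc]
      refine ⟨⟨by nlinarith, by nlinarith⟩, by nlinarith, by nlinarith⟩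

lemma FCoeff_pos_iff (n : ℕ) (d r : ℤ) :
    0 < FCoeff n d r ↔ ∃ e ≤ d + 1, IsSumOfPhiSupport (n - 1) e r := by
  have hpos (e : ℤ) : 0 < phiPow (n - 1) e r * (p24 (d - e) : ℝ) ↔
      IsSumOfPhiSupport (n - 1) e r ∧ e ≤ d + 1 := by
    rw [mul_pos_iff_of_nonneg (phiPow_nonneg _ _ _) (Nat.cast_nonneg _), phiPow_pos_iff,
      Nat.cast_pos, p24_pos_iff, neg_le_sub_iff_le_add]
  rw [FCoeff, tsum_pos_iff_of_nonneg, exists_congr hpos]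
  · simp only [and_comm]
  · exact fun e => mul_nonneg (phiPow_nonneg _ _ _) (Nat.cast_nonneg _)
  · refine (Set.finite_Icc 0 (d + 1)).subset fun e he => ?_
    obtain ⟨he, hle⟩ := (hpos e).mp he
    exact ⟨he.nonneg, hle⟩

theorem stmt15 (n : ℕ) (hn : 2 ≤ n) (d r : ℤ) :
    0 < FCoeff n d r ↔
      ∃ dd rr : Fin (n - 1) → ℤ,
        (∀ i, 0 ≤ 4 * dd i - (rr i) ^ 2) ∧     -- 2dᵢ − rᵢ²/2 ≥ 0
        (2 * (d : ℚ) - (r : ℚ) ^ 2 / (2 * (n : ℚ) - 2)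
          = -2 + (∑ i, 2 * (dd i : ℚ))
              - (∑ i, (rr i : ℚ)) ^ 2 / (2 * (n : ℚ) - 2)) ∧
        (r ≡ ∑ i, rr i [ZMOD (2 * (n : ℤ) - 2)] ∨
         r ≡ -∑ i, rr i [ZMOD (2 * (n : ℤ) - 2)]) := by
  obtain ⟨k, rfl⟩ : ∃ k, n = k + 1 := ⟨n - 1, by omega⟩
  have hQ : 2 * ((k + 1 : ℕ) : ℚ) - 2 = 2 * k := by push_cast; ring
  have hZ : 2 * ((k + 1 : ℕ) : ℤ) - 2 = 2 * k := by push_cast; ring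
  rw [FCoeff_pos_iff, hQ, hZ, Nat.add_sub_cancel]
  constructor
  · rintro ⟨e, he, hsum⟩
    obtain ⟨dd, rr, h, hd, hr⟩ := hsum.mono (by omega) he
    refine ⟨dd, rr, h, ?_, Or.inl (by rw [hr])⟩
    have hdQ : ∑ i, (dd i : ℚ) = d + 1 := by exact_mod_cast hd
    have hrQ : ∑ i, (rr i : ℚ) = r := by exact_mod_cast hr
    rw [← Finset.mul_sum, hdQ, hrQ]
    ring
  · rintro ⟨dd, rr, h, hnorm, hr⟩
    refine ⟨d + 1, le_rfl, IsSumOfPhiSupport.of_norm_eq_of_modEq (by omega)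
      ⟨dd, rr, h, rfl, rfl⟩ ?_ hr⟩
    push_cast [Finset.mul_sum]
    linarith
end
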